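/- If L ≥ log(2/δ)/√λ with 0 < δ < 1 and 0 < λ ≤ 1, then the success probability P(L, λ, δ) = 1 − δ²·T_L(T_{1/L}(1/δ)·√(1−λ))² satisfies 1 − δ² ≤ P(L, λ, δ) ≤ 1. -/

import Mathlib

/-- Inverse hyperbolic cosine. -/
noncomputable def arcosh (x : ℝ) : ℝ := Real.log (x + Real.sqrt (x ^ 2 - 1))

/-- The Chebyshev function of the first kind of (possibly non-integer) degree `s`,
defined via `cosh (s · arcosh x)` for `x ≥ 1` and `cos (s · arccos x)` otherwise. -/
noncomputable def Tcheb (s x : ℝ) : ℝ :=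
  if 1 ≤ x then Real.cosh (s * arcosh x) else Real.cos (s * Real.arccos x)

/-- The fixed-point amplitude-amplification success probability
`P(L, λ, δ) = 1 − δ² · T_L(T_{1/L}(1/δ) · √(1−λ))²`. -/
noncomputable def succProb (L : ℕ) (lam δ : ℝ) : ℝ :=
  1 - δ ^ 2 * (Tcheb L (Tcheb (1 / (L : ℝ)) (1 / δ) * Real.sqrt (1 - lam))) ^ 2


/-! Since `1/δ ≥ 1`, the inner argument is `x = cosh(arcosh(1/δ)/L) · √(1-λ)`. The hypothesis on `L`
together with `arcosh y ≤ log (2y)` gives `arcosh(1/δ)/L ≤ √λ`, hence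
`x ≤ cosh √λ · √(1-λ) ≤ exp(λ/2) · exp(-λ/2) = 1`. On `x ≤ 1` the Chebyshev function is a cosine
(or equals `1`), so `T_L(x)² ∈ [0, 1]` and `P ∈ [1 - δ², 1]`. -/

open Real hiding arcosh

lemma arcosh_le_log_two_mul {x : ℝ} (hx : 1 ≤ x) : arcosh x ≤ log (2 * x) := by
  have hsqrt : √(x ^ 2 - 1) ≤ x :=
    calc √(x ^ 2 - 1) ≤ √(x ^ 2) := sqrt_le_sqrt (by linarith)
      _ = x := sqrt_sq (by linarith)
  exact log_le_log (by linarith [sqrt_nonneg (x ^ 2 - 1)]) (by linarith)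

lemma cosh_mul_sqrt_one_sub_le_one {t lam : ℝ} (hlam : 0 ≤ lam) (ht : |t| ≤ √lam) :
    cosh t * √(1 - lam) ≤ 1 := by
  have hcosh : cosh t ≤ exp (lam / 2) :=
    calc cosh t ≤ cosh √lam := cosh_le_cosh.mpr (by rwa [abs_of_nonneg (sqrt_nonneg lam)])
      _ ≤ exp (√lam ^ 2 / 2) := cosh_le_exp_half_sq _
      _ = exp (lam / 2) := by rw [sq_sqrt hlam]
  have hsqrt : √(1 - lam) ≤ exp (-(lam / 2)) :=
    calc √(1 - lam) ≤ √(exp (-lam)) := sqrt_le_sqrt (by linarith [add_one_le_exp (-lam)])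
      _ = exp (-(lam / 2)) := by rw [← exp_half]; ring_nf
  calc cosh t * √(1 - lam) ≤ exp (lam / 2) * exp (-(lam / 2)) :=
        mul_le_mul hcosh hsqrt (sqrt_nonneg _) (exp_pos _).le
    _ = 1 := by rw [← exp_add, add_neg_cancel, exp_zero]

lemma Tcheb_sq_le_one (s : ℝ) {x : ℝ} (hx : x ≤ 1) : Tcheb s x ^ 2 ≤ 1 := by
  unfold Tcheb
  split_ifs with h
  · simp [le_antisymm hx h, arcosh]
  · exact sq_le_one_iff_abs_le_one _ |>.mpr (abs_cos_le_one _)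

lemma succProb_mem_Icc {L : ℕ} {lam δ : ℝ}
    (hx : Tcheb (1 / (L : ℝ)) (1 / δ) * √(1 - lam) ≤ 1) :
    1 - δ ^ 2 ≤ succProb L lam δ ∧ succProb L lam δ ≤ 1 := by
  have hT := Tcheb_sq_le_one L hx
  have hT₀ := sq_nonneg (Tcheb L (Tcheb (1 / (L : ℝ)) (1 / δ) * √(1 - lam)))
  have hδ₀ := sq_nonneg δ
  unfold succProb
  constructor <;> nlinarith

theorem succProb_converged_general (L : ℕ) (δ lam : ℝ)
    (hδ : 0 < δ) (hδ' : δ < 1) (hlam : 0 < lam)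
    (hL : Real.log (2 / δ) / Real.sqrt lam ≤ (L : ℝ)) :
    1 - δ ^ 2 ≤ succProb L lam δ ∧ succProb L lam δ ≤ 1 := by
  have hδ₁ : 1 ≤ 1 / δ := (le_div_iff₀ hδ).mpr (by linarith)
  have harcosh : arcosh (1 / δ) ≤ L * √lam :=
    calc arcosh (1 / δ) ≤ log (2 / δ) := by
          simpa only [mul_one_div] using arcosh_le_log_two_mul hδ₁
      _ ≤ L * √lam := (div_le_iff₀ (sqrt_pos.mpr hlam)).mp hL
  have harcosh₀ : 0 ≤ arcosh (1 / δ) := Real.arcosh_nonneg hδ₁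
  have hscaled : |1 / (L : ℝ) * arcosh (1 / δ)| ≤ √lam := by
    rw [abs_of_nonneg (mul_nonneg (by positivity) harcosh₀), one_div_mul_eq_div]
    exact div_le_of_le_mul₀ L.cast_nonneg (sqrt_nonneg _) (by linarith)
  apply succProb_mem_Icc
  rw [Tcheb, if_pos hδ₁]
  exact cosh_mul_sqrt_one_sub_le_one hlam.le hscaled

/-- Yoder–Low–Chuang convergence: if `L ≥ log(2/δ)/√λ` then
`1 − δ² ≤ P(L, λ, δ) ≤ 1`. -/
theorem succProb_converged (L : ℕ) (δ lam : ℝ)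
    (hδ : 0 < δ) (hδ' : δ < 1) (hlam : 0 < lam) (hlam' : lam ≤ 1)
    (hL : Real.log (2 / δ) / Real.sqrt lam ≤ (L : ℝ)) :
    1 - δ ^ 2 ≤ succProb L lam δ ∧ succProb L lam δ ≤ 1 :=
  succProb_converged_general L δ lam hδ hδ' hlam hL
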